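/- Let n ≥ 2, let 0 ≤ a, b ≤ n−1, and let i_1, …, i_a ∈ {1,…,n−1} with i_1 < i_2 < ⋯ < i_a. Set γ = σ_{i_a} ⋯ σ_{i_2} σ_{i_1} σ_1 σ_2 ⋯ σ_b ∈ B_n^+. Then tr_n^0(γ) lies in ℤ[q,z], and its evaluation at z = 0 equals q^a if a = b and i_j = j for all 1 ≤ j ≤ a, and equals 0 otherwise. -/

import Mathlib

noncomputable section
open scoped Classical

/-- `𝕂 = ℂ(q)`. -/
abbrev K : Type := RatFunc ℂ
/-- `𝕂(z)`. -/
abbrev Kz : Type := RatFunc K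
/-- the variable `q`. -/
def q : K := RatFunc.X
/-- the variable `z`. -/
def z : Kz := RatFunc.X

/-- The braid relations, as elements of the free group on `σ_1, …, σ_{n-1}`
(0-indexed `i ↔ σ_{i+1}`). -/
def braidRels (n : ℕ) : Set (FreeGroup (Fin (n - 1))) :=
  {r | (∃ i j : Fin (n - 1), ((i : ℕ) + 1 = (j : ℕ) ∨ (j : ℕ) + 1 = (i : ℕ)) ∧
          r = FreeGroup.of i * FreeGroup.of j * FreeGroup.of i *
              (FreeGroup.of j * FreeGroup.of i * FreeGroup.of j)⁻¹) ∨
       (∃ i j : Fin (n - 1), ((i : ℕ) + 2 ≤ (j : ℕ) ∨ (j : ℕ) + 2 ≤ (i : ℕ)) ∧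
          r = FreeGroup.of i * FreeGroup.of j * (FreeGroup.of j * FreeGroup.of i)⁻¹)}

/-- The braid group `B_n` on `n` strands. -/
def BG (n : ℕ) : Type := PresentedGroup (braidRels n)

instance (n : ℕ) : Group (BG n) := inferInstanceAs (Group (PresentedGroup _))

/-- The standard generator `σ_{i+1}` of the braid group. -/
def bgen {n : ℕ} (i : Fin (n - 1)) : BG n := PresentedGroup.of i

lemma bgen_braid {m : ℕ} (i j : Fin (m - 1)) (h : (i : ℕ) + 1 = (j : ℕ) ∨ (j : ℕ) + 1 = (i : ℕ)) :
    bgen (n := m) i * bgen j * bgen i = bgen j * bgen i * bgen j := by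
  have key : PresentedGroup.mk (braidRels m)
      (FreeGroup.of i * FreeGroup.of j * FreeGroup.of i *
        (FreeGroup.of j * FreeGroup.of i * FreeGroup.of j)⁻¹) = 1 :=
    (QuotientGroup.eq_one_iff _).mpr (Subgroup.subset_normalClosure (Or.inl ⟨i, j, h, rfl⟩))
  rw [map_mul, map_inv, mul_inv_eq_one] at key
  exact key

lemma bgen_comm {m : ℕ} (i j : Fin (m - 1)) (h : (i : ℕ) + 2 ≤ (j : ℕ) ∨ (j : ℕ) + 2 ≤ (i : ℕ)) :
    bgen (n := m) i * bgen j = bgen j * bgen i := by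
  have key : PresentedGroup.mk (braidRels m)
      (FreeGroup.of i * FreeGroup.of j * (FreeGroup.of j * FreeGroup.of i)⁻¹) = 1 :=
    (QuotientGroup.eq_one_iff _).mpr (Subgroup.subset_normalClosure (Or.inr ⟨i, j, h, rfl⟩))
  rw [map_mul, map_inv, mul_inv_eq_one] at key
  exact key

/-- The standard inclusion `B_n → B_{n+1}`. -/
def inclB {n : ℕ} : BG n →* BG (n + 1) :=
  PresentedGroup.toGroup (f := fun i : Fin (n - 1) => bgen (Fin.castLE (by omega) i))
    (by
      rintro r (⟨i, j, hij, rfl⟩ | ⟨i, j, hij, rfl⟩) <;>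
        simp only [map_mul, map_inv, FreeGroup.lift_apply_of, mul_inv_eq_one]
      · exact bgen_braid _ _ (by simpa using hij)
      · exact bgen_comm _ _ (by simpa using hij))

/-- The positive braid monoid `B_n⁺`, the submonoid of `B_n` generated by the `σ_i`. -/
def Bplus (n : ℕ) : Submonoid (BG n) := Submonoid.closure (Set.range (bgen (n := n)))

/-- The monoid algebra `𝕂[B_n]`. -/
abbrev MAB (n : ℕ) : Type := MonoidAlgebra K (BG n)

/-- The Hecke relations `σ_k² = (q-1)σ_k + q`. -/
def hrelB (n : ℕ) : MAB n → MAB n → Prop := fun x y =>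
  ∃ i : Fin (n - 1), x = (MonoidAlgebra.of K (BG n) (bgen i)) ^ 2 ∧
    y = (q - 1) • MonoidAlgebra.of K (BG n) (bgen i) + q • 1

/-- The Hecke algebra `H(B_n)` of the braid group / symmetric group. -/
def HB (n : ℕ) : Type := RingQuot (hrelB n)

instance (n : ℕ) : Ring (HB n) := inferInstanceAs (Ring (RingQuot (hrelB n)))
instance (n : ℕ) : Algebra K (HB n) := inferInstanceAs (Algebra K (RingQuot (hrelB n)))

/-- The natural map `B_n → H(B_n)`. -/
def ιHB {n : ℕ} (β : BG n) : HB n := RingQuot.mkAlgHom K (hrelB n) (MonoidAlgebra.of K (BG n) β)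

/-- The generator `σ_n` of `B_{n+2}` (0-indexed `n`), used in the Markov condition. -/
def lastGenB (n : ℕ) : Fin ((n + 2) - 1) := ⟨n, by omega⟩

/-- A collection of 𝕂-linear maps `H(B_n) → 𝕂(z)`, `n ≥ 1`
(index `n` in the collection corresponds to `n+1` strands). -/
abbrev TRBc : Type := ∀ n : ℕ, HB (n + 1) →ₗ[K] Kz

/-- The Markov trace conditions for the tower of Hecke algebras `{H(B_n)}ₙ`. -/
def IsMarkovB (T : TRBc) : Prop :=
  (∀ (n : ℕ) (α β : BG (n + 1)), T n (ιHB (α * β)) = T n (ιHB (β * α))) ∧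
  (∀ (n : ℕ) (β : BG (n + 1)), T (n + 1) (ιHB (inclB β)) = T n (ιHB β)) ∧
  (∀ (n : ℕ) (β : BG (n + 1)),
    T (n + 1) (ιHB (inclB β * bgen (lastGenB n))) = z * T n (ιHB β))

/-- The subring `ℤ[q] ⊆ 𝕂`. -/
def Zq : Subring K := Subring.closure {q}

/-- The subring `ℤ[q, z] ⊆ 𝕂(z)`. -/
def Rqz : Subring Kz := Subring.closure {algebraMap K Kz q, z}

/-- Evaluation at `z = 0` of a rational function in `z`. -/
def evalz0 : Kz → K := RatFunc.eval (RingHom.id K) 0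


/-!
Write the braid as the word `I.reverse ++ [0, …, b-1]` in the (0-indexed) generators, with `I`
strictly increasing, and induct on `(I, b)`. Let `M` be the last letter of `I`. If `b ≤ M`, a cyclic
shift makes `σ_M` the last and largest letter, so the Markov property yields a factor `z`. If
`b > M + 1`, the last letter `σ_{b-1}` is the largest one and again yields `z`. If `b = M + 1`, a
cyclic shift produces `σ_M²`, and the Hecke relation turns the trace into `(q - 1)` times a trace
with value `0` at `z = 0` plus `q` times the trace for `(I without M, M)`. Every step keeps the
trace a polynomial in `z` over `ℤ[q]`; only the last case can have nonzero constant term, and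
this happens exactly when `I = [0, …, b-1]`.
-/

open Polynomial

lemma ιHB_mul {n : ℕ} (α β : BG n) : ιHB (α * β) = ιHB α * ιHB β := by
  simp only [ιHB, map_mul]
  rfl

lemma ιHB_one {n : ℕ} : ιHB (1 : BG n) = 1 := by
  simp only [ιHB, map_one]
  rfl

lemma ιHB_bgen_mul_self {n : ℕ} (i : Fin (n - 1)) :
    ιHB (bgen i) * ιHB (bgen i) = (q - 1) • ιHB (bgen i) + q • (1 : HB n) := by
  have h := RingQuot.mkAlgHom_rel K (s := hrelB n) ⟨i, rfl, rfl⟩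
  rwa [map_pow, map_add, map_smul, map_smul, map_one, pow_two] at h

/-- Letters `i ≥ n - 1`, which name no generator of `B_n`, are read as `1`. -/
def bword (n : ℕ) (L : List ℕ) : BG n :=
  (L.map fun i => if h : i < n - 1 then bgen ⟨i, h⟩ else 1).prod

lemma bword_append (n : ℕ) (L₁ L₂ : List ℕ) :
    bword n (L₁ ++ L₂) = bword n L₁ * bword n L₂ := by
  simp only [bword, List.map_append, List.prod_append]

lemma bword_singleton {n i : ℕ} (h : i < n - 1) : bword n [i] = bgen ⟨i, h⟩ := by
  simp [bword, h]

lemma bword_map_val {n : ℕ} (L : List (Fin (n - 1))) :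
    bword n (L.map Fin.val) = (L.map bgen).prod := by
  simp [bword, Function.comp_def]

lemma inclB_bword {n : ℕ} {L : List ℕ} (h : ∀ i ∈ L, i < n) :
    inclB (bword (n + 1) L) = bword (n + 2) L := by
  simp only [bword, map_list_prod, List.map_map]
  refine congrArg List.prod (List.map_congr_left fun i hi => ?_)
  have hi := h i hi
  simp only [Function.comp_apply, dif_pos (show i < n + 1 - 1 by omega),
    dif_pos (show i < n + 2 - 1 by omega)]
  exact PresentedGroup.toGroup.of _

def wordTrace (T : TRBc) (n : ℕ) (L : List ℕ) : Kz := T n (ιHB (bword (n + 1) L))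

lemma wordTrace_append_sq (T : TRBc) {n i : ℕ} (L : List ℕ) (h : i < n) :
    wordTrace T n (L ++ [i, i]) = (q - 1) • wordTrace T n (L ++ [i]) + q • wordTrace T n L := by
  have hi : i < n + 1 - 1 := by omega
  simp only [wordTrace]
  rw [show L ++ [i, i] = L ++ [i] ++ [i] by simp, bword_append, bword_append,
    bword_singleton hi, ιHB_mul, ιHB_mul, mul_assoc, ιHB_bgen_mul_self, mul_add, mul_smul_comm,
    mul_smul_comm, mul_one, map_add, map_smul, map_smul]

namespace IsMarkovB

variable {T : TRBc}

lemma wordTrace_append_comm (hT : IsMarkovB T) (n : ℕ) (L₁ L₂ : List ℕ) :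
    wordTrace T n (L₁ ++ L₂) = wordTrace T n (L₂ ++ L₁) := by
  simp only [wordTrace, bword_append]
  exact hT.1 n _ _

lemma wordTrace_cons (hT : IsMarkovB T) (n i : ℕ) (L : List ℕ) :
    wordTrace T n (i :: L) = wordTrace T n (L ++ [i]) :=
  hT.wordTrace_append_comm n [i] L

lemma wordTrace_succ (hT : IsMarkovB T) {n : ℕ} {L : List ℕ} (h : ∀ i ∈ L, i < n) :
    wordTrace T (n + 1) L = wordTrace T n L := by
  rw [wordTrace, ← inclB_bword h]
  exact hT.2.1 n _

lemma wordTrace_of_le (hT : IsMarkovB T) {k n : ℕ} {L : List ℕ} (hkn : k ≤ n)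
    (h : ∀ i ∈ L, i < k) : wordTrace T n L = wordTrace T k L := by
  induction n, hkn using Nat.le_induction with
  | base => rfl
  | succ n hkn ih => rw [hT.wordTrace_succ fun i hi => (h i hi).trans_le hkn, ih]

lemma wordTrace_nil (hT : IsMarkovB T) (hnorm : T 0 1 = 1) (n : ℕ) : wordTrace T n [] = 1 := by
  rw [hT.wordTrace_of_le (Nat.zero_le n) (by simp), wordTrace, bword, List.map_nil,
    List.prod_nil, ιHB_one, hnorm]

lemma wordTrace_append_max (hT : IsMarkovB T) {n M : ℕ} {L : List ℕ} (h : ∀ i ∈ L, i < M)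
    (hM : M < n) : wordTrace T n (L ++ [M]) = z * wordTrace T M L := by
  have hL : ∀ i ∈ L ++ [M], i < M + 1 := by
    simp only [List.mem_append, List.mem_singleton]
    rintro i (hi | rfl) <;> grind
  rw [hT.wordTrace_of_le hM hL, wordTrace, bword_append, bword_singleton (by omega),
    ← inclB_bword h]
  exact hT.2.2 M _

end IsMarkovB

def zqPoly : Zq[X] →+* Kz := (algebraMap K[X] Kz).comp (mapRingHom Zq.subtype)

def IsZqPolyWithConst (x : Kz) (t : K) : Prop :=
  ∃ p : Zq[X], zqPoly p = x ∧ (p.coeff 0 : K) = t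

lemma q_mem_Zq : q ∈ Zq := Subring.subset_closure rfl

namespace IsZqPolyWithConst

lemma one : IsZqPolyWithConst 1 1 := ⟨1, map_one _, by simp⟩

lemma add {x y : Kz} {s t : K} (hx : IsZqPolyWithConst x s) (hy : IsZqPolyWithConst y t) :
    IsZqPolyWithConst (x + y) (s + t) := by
  obtain ⟨p, rfl, rfl⟩ := hx
  obtain ⟨r, rfl, rfl⟩ := hy
  exact ⟨p + r, map_add _ _ _, by simp⟩

lemma smul {x : Kz} {t c : K} (hc : c ∈ Zq) (hx : IsZqPolyWithConst x t) :
    IsZqPolyWithConst (c • x) (c * t) := by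
  obtain ⟨p, rfl, rfl⟩ := hx
  refine ⟨C ⟨c, hc⟩ * p, ?_, by simp⟩
  simp [zqPoly, RatFunc.smul_eq_C_mul]

lemma z_mul {x : Kz} {t : K} (hx : IsZqPolyWithConst x t) : IsZqPolyWithConst (z * x) 0 := by
  obtain ⟨p, rfl, -⟩ := hx
  refine ⟨X * p, ?_, by simp⟩
  simp [zqPoly, z, RatFunc.algebraMap_X]

lemma mem_Rqz {x : Kz} {t : K} (hx : IsZqPolyWithConst x t) : x ∈ Rqz := by
  obtain ⟨p, rfl, -⟩ := hx
  have hq : algebraMap K Kz q ∈ Rqz := Subring.subset_closure (by simp)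
  have hz : z ∈ Rqz := Subring.subset_closure (by simp)
  have hZq : Zq ≤ Rqz.comap (algebraMap K Kz) :=
    Subring.closure_le.mpr (Set.singleton_subset_iff.mpr hq)
  induction p using Polynomial.induction_on' with
  | add p r hp hr => rw [map_add]; exact Rqz.add_mem hp hr
  | monomial k c =>
    rw [← C_mul_X_pow_eq_monomial, map_mul, map_pow]
    refine Rqz.mul_mem ?_ (Rqz.pow_mem ?_ k)
    · simpa [zqPoly] using hZq c.2
    · simpa [zqPoly, z, RatFunc.algebraMap_X] using hz

lemma evalz0_eq {x : Kz} {t : K} (hx : IsZqPolyWithConst x t) : evalz0 x = t := by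
  obtain ⟨p, rfl, rfl⟩ := hx
  simp [zqPoly, evalz0, RatFunc.eval_algebraMap]

end IsZqPolyWithConst

namespace IsMarkovB

variable {T : TRBc}

lemma isZqPolyWithConst_wordTrace_cons_range_succ (hT : IsMarkovB T) {I : List ℕ} {M n : ℕ}
    (hIM : ∀ i ∈ I, i < M) (hMn : M < n)
    (h₁ : IsZqPolyWithConst (wordTrace T n (I.reverse ++ List.range (M + 1)))
      (if I = List.range (M + 1) then q ^ (M + 1) else 0))
    (h₂ : IsZqPolyWithConst (wordTrace T n (I.reverse ++ List.range M))
      (if I = List.range M then q ^ M else 0)) :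
    IsZqPolyWithConst (wordTrace T n (M :: (I.reverse ++ List.range (M + 1))))
      (if I ++ [M] = List.range (M + 1) then q ^ (M + 1) else 0) := by
  have hM : M ∉ I := fun h => (hIM M h).false
  rw [List.range_succ, ← List.append_assoc,
    if_neg (ne_of_mem_of_not_mem' (a := M) (by simp) hM).symm] at h₁
  rw [hT.wordTrace_cons, List.range_succ,
    show I.reverse ++ (List.range M ++ [M]) ++ [M] = I.reverse ++ List.range M ++ [M, M] by simp,
    wordTrace_append_sq T _ hMn]
  convert (h₁.smul (Zq.sub_mem q_mem_Zq Zq.one_mem)).add (h₂.smul q_mem_Zq) using 1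
  simp only [List.append_left_inj]
  split_ifs <;> ring

theorem isZqPolyWithConst_wordTrace (hT : IsMarkovB T) (hnorm : T 0 1 = 1)
    {I : List ℕ} (hI : I.Pairwise (· < ·)) {b n : ℕ} (hIn : ∀ i ∈ I, i < n)
    (hbn : b ≤ n) :
    IsZqPolyWithConst (wordTrace T n (I.reverse ++ List.range b))
      (if I = List.range b then q ^ b else 0) := by
  induction I using List.reverseRecOn generalizing b n with
  | nil =>
    induction b generalizing n with
    | zero => simpa [hT.wordTrace_nil hnorm] using IsZqPolyWithConst.one
    | succ b ih =>
      rw [if_neg (by simp), List.reverse_nil, List.nil_append, List.range_succ,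
        hT.wordTrace_append_max (fun i => List.mem_range.mp) hbn]
      exact (ih (by simp) le_rfl).z_mul
  | append_singleton I M ih =>
    obtain ⟨hI, -, hIM⟩ := List.pairwise_append.mp hI
    replace hIM : ∀ i ∈ I, i < M := fun i hi => hIM i hi M (List.mem_singleton_self M)
    have hMn : M < n := hIn M (by simp)
    rw [List.reverse_append, List.reverse_singleton, List.singleton_append, List.cons_append]
    induction b using Nat.strong_induction_on generalizing n with
    | _ b ihb =>
    rcases lt_trichotomy b (M + 1) with hbM | rfl | hMb
    · have hlt : ∀ i ∈ I.reverse ++ List.range b, i < M := by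
        simp only [List.mem_append, List.mem_reverse, List.mem_range]
        rintro i (hi | hi) <;> grind
      rw [hT.wordTrace_cons, hT.wordTrace_append_max hlt hMn,
        if_neg (ne_of_mem_of_not_mem' (a := M) (by simp) (by simpa using hbM))]
      exact (ih hI hIM (by omega)).z_mul
    · have hIn' : ∀ i ∈ I, i < n := fun i hi => (hIM i hi).trans hMn
      exact hT.isZqPolyWithConst_wordTrace_cons_range_succ hIM hMn
        (ih hI hIn' hbn) (ih hI hIn' hMn.le)
    · obtain ⟨b, rfl⟩ : ∃ b', b = b' + 1 := ⟨b - 1, by omega⟩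
      have hlt : ∀ i ∈ M :: (I.reverse ++ List.range b), i < b := by
        simp only [List.mem_cons, List.mem_append, List.mem_reverse, List.mem_range]
        rintro i (rfl | hi | hi) <;> grind
      rw [List.range_succ, ← List.append_assoc, ← List.cons_append,
        hT.wordTrace_append_max hlt hbn,
        if_neg (ne_of_mem_of_not_mem' (a := b) (by simp) fun h => by grind).symm]
      exact (ihb b (by omega) (fun i hi => by grind) le_rfl (by omega)).z_mul

end IsMarkovB

/-- Let `n = m+1 ≥ 2`, `0 ≤ a, b ≤ n-1`, and `i_1 < i_2 < ⋯ < i_a` in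
`{1, …, n-1}`.  Set `γ = σ_{i_a} ⋯ σ_{i_2} σ_{i_1} σ_1 σ_2 ⋯ σ_b ∈ B_n⁺`.  Then `tr⁰_n(γ)`
lies in `ℤ[q, z]` and its evaluation at `z = 0` is `q^a` if `a = b` and `i_j = j` for all
`j`, and `0` otherwise. -/
theorem statement19 (T : TRBc) (hT : IsMarkovB T) (hnorm : T 0 1 = 1)
    (m : ℕ) (a b : ℕ) (hb : b ≤ m)
    (idx : Fin a → Fin ((m + 1) - 1)) (hidx : StrictMono idx) :
    T m (ιHB ((List.ofFn fun j : Fin a => bgen (idx j)).reverse.prod *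
          (List.ofFn fun j : Fin b => bgen (⟨(j : ℕ), by omega⟩ : Fin ((m + 1) - 1))).prod))
        ∈ Rqz ∧
    evalz0 (T m (ιHB ((List.ofFn fun j : Fin a => bgen (idx j)).reverse.prod *
          (List.ofFn fun j : Fin b => bgen (⟨(j : ℕ), by omega⟩ : Fin ((m + 1) - 1))).prod)))
      = if a = b ∧ ∀ j : Fin a, (idx j : ℕ) = (j : ℕ) then q ^ a else 0 := by
  set I := (List.ofFn idx).map Fin.val
  have hrange : List.range b =
      (List.ofFn fun j : Fin b => (⟨(j : ℕ), by omega⟩ : Fin ((m + 1) - 1))).map Fin.val := by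
    rw [List.map_ofFn]
    exact List.ext_getElem (by simp) (by simp)
  have hword : bword (m + 1) (I.reverse ++ List.range b) =
      (List.ofFn fun j : Fin a => bgen (idx j)).reverse.prod *
        (List.ofFn fun j : Fin b => bgen (⟨(j : ℕ), by omega⟩ : Fin ((m + 1) - 1))).prod := by
    rw [bword_append, ← List.map_reverse, bword_map_val, hrange, bword_map_val, List.map_reverse,
      List.map_ofFn, List.map_ofFn]
    rfl
  have hI : I = List.range b ↔ a = b ∧ ∀ j : Fin a, (idx j : ℕ) = (j : ℕ) := by
    simp only [I, List.ext_getElem_iff, List.length_map, List.length_ofFn, List.length_range,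
      List.getElem_map, List.getElem_ofFn, List.getElem_range]
    exact ⟨fun ⟨hab, h⟩ => ⟨hab, fun j => h j j.2 (hab ▸ j.2)⟩,
      fun ⟨hab, h⟩ => ⟨hab, fun j hj _ => h ⟨j, hj⟩⟩⟩
  have hvalue : (if I = List.range b then q ^ b else 0) =
      if a = b ∧ ∀ j : Fin a, (idx j : ℕ) = (j : ℕ) then q ^ a else 0 := by
    split_ifs with h₁ h₂ h₂
    · rw [(hI.mp h₁).1]
    · exact absurd (hI.mp h₁) h₂
    · exact absurd (hI.mpr h₂) h₁
    · rfl
  have key := hT.isZqPolyWithConst_wordTrace hnorm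
    (List.pairwise_map.mpr (List.pairwise_ofFn.mpr fun _ _ h => hidx h))
    (fun i hi => by simp at hi; omega) hb
  rw [wordTrace, hword, hvalue] at key
  exact ⟨key.mem_Rqz, key.evalz0_eq⟩
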